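/- (Concentration of the clipped estimator with divergence-based clipping level.) Let 0 < ε ≤ 2/e and δ > 0, set η = 2·log(2/ε)·M and μ = ∫ Y dP, and define W_s = Y(X_s)·r(X_s)·1{r(X_s) ≤ η} for s = 1,…,t. Then the probability of the event { μ − δ − ε/2 ≤ (1/t)·Σ_{s=1}^t W_s ≤ μ + δ } is at least 1 − 2·exp(−δ²·t/(8·(log(2/ε))²·M²)). -/

import Mathlib

/-! The clipped weight `W = Y r 1{r ≤ η}` takes values in `[0, η]`, so by Hoeffding's inequality
its empirical mean is within `δ` of `E_Q W` except with probability `2 exp (-2tδ²/η²)`, which is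
below the claimed bound. The clipping bias `E_P Y - E_Q W = E_Q [Y r 1{r > η}]` is nonnegative
and, since `r ≤ r e^{r-η}` on `{r > η}`, at most `e^{1-η} E_Q [r e^{r-1}] = e^{1-η} (1 + D)`;
the choice `η = 2 log(2/ε) M` makes this at most `ε/2`. -/

open MeasureTheory ProbabilityTheory

lemma abs_mean_sub_lt_of_abs_sum_sub_lt {ι : Type*} [Fintype ι] {w : ι → ℝ} {m δ : ℝ}
    (h : |∑ i, (w i - m)| < Fintype.card ι * δ) :
    |(1 / Fintype.card ι) * ∑ i, w i - m| < δ := by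
  have hn : (0 : ℝ) < Fintype.card ι := by
    by_contra! hn
    simp [le_antisymm hn (Nat.cast_nonneg _)] at h
    exact (abs_nonneg _).not_gt h
  have h_mean : (1 / Fintype.card ι) * ∑ i, w i - m = (∑ i, (w i - m)) / Fintype.card ι := by
    rw [Finset.sum_sub_distrib, Finset.sum_const, Finset.card_univ, nsmul_eq_mul]
    field_simp
  rwa [h_mean, abs_div, abs_of_pos hn, div_lt_iff₀ hn, mul_comm]

section Hoeffding

variable {Ω ι : Type*} [MeasurableSpace Ω] {μ : Measure Ω} [IsProbabilityMeasure μ] [Fintype ι]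
  {V : ι → Ω → ℝ} {a b ε : ℝ}

lemma measureReal_le_sum_sub_integral_le (h_indep : iIndepFun V μ)
    (h_meas : ∀ i, Measurable (V i)) (hV : ∀ i ω, V i ω ∈ Set.Icc a b) (hε : 0 ≤ ε) :
    μ.real {ω | Fintype.card ι * ε ≤ ∑ i, (V i ω - μ[V i])} ≤
      Real.exp (-2 * Fintype.card ι * ε ^ 2 / (b - a) ^ 2) := by
  have h_centered : iIndepFun (fun i ω ↦ V i ω - μ[V i]) μ :=
    h_indep.comp (fun i x ↦ x - ∫ ω, V i ω ∂μ) fun i ↦ measurable_id.sub_const _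
  have h_tail := HasSubgaussianMGF.measure_sum_ge_le_of_iIndepFun h_centered
    (s := Finset.univ)
    (fun i _ ↦ hasSubgaussianMGF_of_mem_Icc (h_meas i).aemeasurable (ae_of_all _ (hV i)))
    (by positivity : 0 ≤ Fintype.card ι * ε)
  refine h_tail.trans_eq (congrArg Real.exp ?_)
  rcases Nat.eq_zero_or_pos (Fintype.card ι) with hn | hn
  · simp [hn]
  · simp only [Finset.sum_const, Finset.card_univ, nsmul_eq_mul, NNReal.coe_mul,
      NNReal.coe_natCast, NNReal.coe_pow, NNReal.coe_div, coe_nnnorm, Real.norm_eq_abs,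
      NNReal.coe_ofNat, div_pow, sq_abs]
    rcases eq_or_ne (b - a) 0 with hab | hab
    · simp [hab]
    · field_simp

lemma one_sub_two_mul_exp_le_measureReal_abs_sum_sub_integral_lt (h_indep : iIndepFun V μ)
    (h_meas : ∀ i, Measurable (V i)) (hV : ∀ i ω, V i ω ∈ Set.Icc a b) (hε : 0 ≤ ε) :
    1 - 2 * Real.exp (-2 * Fintype.card ι * ε ^ 2 / (b - a) ^ 2) ≤
      μ.real {ω | |∑ i, (V i ω - μ[V i])| < Fintype.card ι * ε} := by
  set S := fun ω ↦ ∑ i, (V i ω - μ[V i])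
  have h_upper : μ.real {ω | Fintype.card ι * ε ≤ S ω} ≤ _ :=
    measureReal_le_sum_sub_integral_le h_indep h_meas hV hε
  have h_lower : μ.real {ω | Fintype.card ι * ε ≤ -S ω} ≤
      Real.exp (-2 * Fintype.card ι * ε ^ 2 / (b - a) ^ 2) := by
    have h_neg_S : ∀ ω, -S ω = ∑ i, (-V i ω - μ[fun ω ↦ -V i ω]) := fun ω ↦ by
      simp only [S, ← Finset.sum_neg_distrib, integral_neg, neg_sub, sub_neg_eq_add,
        neg_add_eq_sub]
    simp only [h_neg_S]
    convert measureReal_le_sum_sub_integral_le (V := fun i ω ↦ -V i ω)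
      (h_indep.comp (fun _ x ↦ -x) fun _ ↦ measurable_neg) (fun i ↦ (h_meas i).neg)
      (fun i ω ↦ ⟨neg_le_neg (hV i ω).2, neg_le_neg (hV i ω).1⟩) hε using 3
    ring
  have h_compl : {ω | |S ω| < Fintype.card ι * ε}ᶜ ⊆
      {ω | Fintype.card ι * ε ≤ S ω} ∪ {ω | Fintype.card ι * ε ≤ -S ω} := fun _ hω ↦
    le_abs.1 (not_lt.1 (Set.notMem_ofPred_iff.1 hω))
  have h_meas_set : MeasurableSet {ω | |S ω| < Fintype.card ι * ε} :=
    measurableSet_lt (by fun_prop) measurable_const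
  have h_compl_le := ((measureReal_mono h_compl).trans (measureReal_union_le _ _)).trans
    (add_le_add h_upper h_lower)
  rw [measureReal_compl h_meas_set, probReal_univ] at h_compl_le
  linarith

end Hoeffding

lemma one_sub_two_mul_exp_le_measureReal_abs_mean_sub_integral_lt {Ω Ω' : Type*}
    [MeasurableSpace Ω] [MeasurableSpace Ω'] {Q : Measure Ω} {Pr : Measure Ω'}
    [IsProbabilityMeasure Pr] {t : ℕ} {X : Fin t → Ω' → Ω} (hX_meas : ∀ s, Measurable (X s))
    (hX_indep : iIndepFun X Pr) (hX_dist : ∀ s, Pr.map (X s) = Q) {f : Ω → ℝ}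
    (hf : Measurable f) {a b : ℝ} (hf_mem : ∀ ω, f ω ∈ Set.Icc a b) {δ : ℝ} (hδ : 0 ≤ δ) :
    1 - 2 * Real.exp (-2 * t * δ ^ 2 / (b - a) ^ 2) ≤
      Pr.real {ω' | |(1 / t) * ∑ s, f (X s ω') - ∫ ω, f ω ∂Q| < δ} := by
  have h_mean : ∀ s, Pr[f ∘ X s] = ∫ ω, f ω ∂Q := fun s ↦ by
    rw [← hX_dist s, integral_map (hX_meas s).aemeasurable hf.aestronglyMeasurable]
    rfl
  have h_hoeffding := one_sub_two_mul_exp_le_measureReal_abs_sum_sub_integral_lt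
    (hX_indep.comp (fun _ ↦ f) fun _ ↦ hf) (fun s ↦ hf.comp (hX_meas s))
    (fun s ω ↦ hf_mem (X s ω)) hδ
  simp only [h_mean, Fintype.card_fin] at h_hoeffding
  refine h_hoeffding.trans (measureReal_mono fun ω' hω' ↦ ?_)
  simpa only [Fintype.card_fin, Set.mem_ofPred_eq] using abs_mean_sub_lt_of_abs_sum_sub_lt
    (w := fun s ↦ f (X s ω')) (by rw [Fintype.card_fin]; exact hω')

section ImportanceWeight

variable {Ω : Type*} [MeasurableSpace Ω] {P Q : Measure Ω} {r : Ω → ℝ}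

lemma integral_eq_one_of_toReal_eq_setIntegral [IsProbabilityMeasure P]
    (hPQ : ∀ A, MeasurableSet A → (P A).toReal = ∫ ω in A, r ω ∂Q) : ∫ ω, r ω ∂Q = 1 := by
  simpa using (hPQ Set.univ MeasurableSet.univ).symm

lemma eq_withDensity_of_toReal_eq_setIntegral [IsProbabilityMeasure P] (hr : ∀ ω, 0 ≤ r ω)
    (hPQ : ∀ A, MeasurableSet A → (P A).toReal = ∫ ω in A, r ω ∂Q) :
    P = Q.withDensity fun ω ↦ ENNReal.ofReal (r ω) := by
  have hr_int : Integrable r Q := .of_integral_ne_zero <| by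
    simp [integral_eq_one_of_toReal_eq_setIntegral hPQ]
  ext A hA
  rw [withDensity_apply _ hA, ← ofReal_integral_eq_lintegral_ofReal hr_int.restrict
    (ae_of_all _ hr), ← hPQ A hA, ENNReal.ofReal_toReal (measure_ne_top P A)]

lemma integral_eq_integral_mul_of_toReal_eq_setIntegral [IsProbabilityMeasure P]
    (hr_meas : Measurable r) (hr : ∀ ω, 0 ≤ r ω)
    (hPQ : ∀ A, MeasurableSet A → (P A).toReal = ∫ ω in A, r ω ∂Q) (g : Ω → ℝ) :
    ∫ ω, g ω ∂P = ∫ ω, g ω * r ω ∂Q := by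
  rw [eq_withDensity_of_toReal_eq_setIntegral hr hPQ,
    integral_withDensity_eq_integral_toReal_smul hr_meas.ennreal_ofReal
      (ae_of_all _ fun _ ↦ ENNReal.ofReal_lt_top)]
  simp [ENNReal.toReal_ofReal (hr _), mul_comm]

lemma integral_mul_exp_sub_one_sub_one_nonneg [IsProbabilityMeasure Q] (hr : ∀ ω, 0 ≤ r ω)
    (hr_one : ∫ ω, r ω ∂Q = 1) (h_int : Integrable (fun ω ↦ r ω * Real.exp (r ω - 1)) Q) :
    0 ≤ ∫ ω, (r ω * Real.exp (r ω - 1) - 1) ∂Q := by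
  have hr_int : Integrable r Q := .of_integral_ne_zero (by simp [hr_one])
  -- `x e^{x-1} ≥ x² ≥ 2x - 1`, and `2r - 2` integrates to zero
  have h_pointwise : ∀ ω, 2 * r ω - 2 ≤ r ω * Real.exp (r ω - 1) - 1 := fun ω ↦ by
    have := mul_le_mul_of_nonneg_left (Real.add_one_le_exp (r ω - 1)) (hr ω)
    nlinarith [sq_nonneg (r ω - 1)]
  calc (0 : ℝ) = ∫ ω, (2 * r ω - 2) ∂Q := by
        rw [integral_sub (hr_int.const_mul 2) (integrable_const 2), integral_const_mul, hr_one]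
        simp
    _ ≤ _ := integral_mono ((hr_int.const_mul 2).sub (integrable_const 2))
        (h_int.sub (integrable_const 1)) h_pointwise

end ImportanceWeight

section Clipping

variable {Ω : Type*}

noncomputable def clippedWeight (r Y : Ω → ℝ) (η : ℝ) (ω : Ω) : ℝ :=
  if r ω ≤ η then Y ω * r ω else 0

variable {r Y : Ω → ℝ} {η : ℝ} {ω : Ω}

lemma clippedWeight_nonneg (hr : 0 ≤ r ω) (hY : 0 ≤ Y ω) : 0 ≤ clippedWeight r Y η ω := by
  unfold clippedWeight
  split_ifs
  exacts [mul_nonneg hY hr, le_rfl]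

lemma clippedWeight_le (hη : 0 ≤ η) (hr : 0 ≤ r ω) (hY : Y ω ≤ 1) :
    clippedWeight r Y η ω ≤ η := by
  unfold clippedWeight
  split_ifs with h
  exacts [(mul_le_of_le_one_left hr hY).trans h, hη]

lemma clippedWeight_le_mul (hr : 0 ≤ r ω) (hY : 0 ≤ Y ω) : clippedWeight r Y η ω ≤ Y ω * r ω := by
  unfold clippedWeight
  split_ifs
  exacts [le_rfl, mul_nonneg hY hr]

lemma mul_sub_clippedWeight_le (hr : 0 ≤ r ω) (hY : Y ω ≤ 1) :
    Y ω * r ω - clippedWeight r Y η ω ≤ Real.exp (1 - η) * (r ω * Real.exp (r ω - 1)) := by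
  unfold clippedWeight
  split_ifs with h
  · rw [sub_self]
    positivity
  · have h_exp : Real.exp (1 - η) * Real.exp (r ω - 1) = Real.exp (r ω - η) := by
      rw [← Real.exp_add]
      ring_nf
    calc Y ω * r ω - 0 ≤ r ω * 1 := by rw [sub_zero, mul_one]; exact mul_le_of_le_one_left hr hY
      _ ≤ r ω * Real.exp (r ω - η) := by
          gcongr
          exact Real.one_le_exp (by linarith [not_le.1 h])
      _ = _ := by rw [← h_exp]; ring

variable [MeasurableSpace Ω]

lemma measurable_clippedWeight (hr : Measurable r) (hY : Measurable Y) :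
    Measurable (clippedWeight r Y η) :=
  Measurable.ite (measurableSet_le hr measurable_const) (hY.mul hr) measurable_const

lemma integral_clippedWeight_mem_Icc {P Q : Measure Ω} [IsProbabilityMeasure P]
    (hr_meas : Measurable r) (hY_meas : Measurable Y) (hr : ∀ ω, 0 ≤ r ω)
    (hPQ : ∀ A, MeasurableSet A → (P A).toReal = ∫ ω in A, r ω ∂Q)
    (hY0 : ∀ ω, 0 ≤ Y ω) (hY1 : ∀ ω, Y ω ≤ 1)
    (h_int : Integrable (fun ω ↦ r ω * Real.exp (r ω - 1)) Q) :
    ∫ ω, clippedWeight r Y η ω ∂Q ∈ Set.Icc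
      (∫ ω, Y ω ∂P - Real.exp (1 - η) * ∫ ω, r ω * Real.exp (r ω - 1) ∂Q) (∫ ω, Y ω ∂P) := by
  have hr_int : Integrable r Q := .of_integral_ne_zero <| by
    simp [integral_eq_one_of_toReal_eq_setIntegral hPQ]
  have hYr_int : Integrable (fun ω ↦ Y ω * r ω) Q :=
    hr_int.mono' (hY_meas.mul hr_meas).aestronglyMeasurable <| ae_of_all _ fun ω ↦ by
      rw [Real.norm_eq_abs, abs_of_nonneg (mul_nonneg (hY0 ω) (hr ω))]
      exact mul_le_of_le_one_left (hr ω) (hY1 ω)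
  have hW_int : Integrable (clippedWeight r Y η) Q :=
    hYr_int.mono' (measurable_clippedWeight hr_meas hY_meas).aestronglyMeasurable <|
      ae_of_all _ fun ω ↦ by
        rw [Real.norm_eq_abs, abs_of_nonneg (clippedWeight_nonneg (hr ω) (hY0 ω))]
        exact clippedWeight_le_mul (hr ω) (hY0 ω)
  rw [integral_eq_integral_mul_of_toReal_eq_setIntegral hr_meas hr hPQ]
  refine ⟨?_, integral_mono hW_int hYr_int fun ω ↦ clippedWeight_le_mul (hr ω) (hY0 ω)⟩
  rw [sub_le_comm, ← integral_sub hYr_int hW_int, ← integral_const_mul]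
  exact integral_mono (hYr_int.sub hW_int) (h_int.const_mul _)
    fun ω ↦ mul_sub_clippedWeight_le (hr ω) (hY1 ω)

end Clipping

lemma neg_two_mul_div_sq_le {t δ L M : ℝ} (ht : 0 ≤ t) :
    -2 * t * δ ^ 2 / (2 * L * M) ^ 2 ≤ -(δ ^ 2 * t) / (8 * L ^ 2 * M ^ 2) := by
  have : 0 ≤ t * δ ^ 2 * L⁻¹ ^ 2 * M⁻¹ ^ 2 := by positivity
  ring_nf
  linarith

lemma one_le_log_two_div {ε : ℝ} (hε0 : 0 < ε) (hε1 : ε ≤ 2 / Real.exp 1) :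
    1 ≤ Real.log (2 / ε) := by
  rw [Real.le_log_iff_exp_le (by positivity), le_div_iff₀ hε0, mul_comm]
  exact (le_div_iff₀ (Real.exp_pos 1)).1 hε1

lemma exp_one_sub_two_mul_log_two_div_mul_le {ε D : ℝ} (hε0 : 0 < ε)
    (hε1 : ε ≤ 2 / Real.exp 1) (hD : 0 ≤ D) :
    Real.exp (1 - 2 * Real.log (2 / ε) * (1 + Real.log (1 + D))) * (1 + D) ≤ ε / 2 := by
  have hL := one_le_log_two_div hε0 hε1
  have h_log : 0 ≤ Real.log (1 + D) := Real.log_nonneg (by linarith)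
  calc _ = Real.exp (1 - 2 * Real.log (2 / ε) * (1 + Real.log (1 + D)) + Real.log (1 + D)) := by
        rw [Real.exp_add, Real.exp_log (by linarith)]
    _ ≤ Real.exp (-Real.log (2 / ε)) := Real.exp_le_exp.2 (by nlinarith)
    _ = ε / 2 := by rw [Real.exp_neg, Real.exp_log (by positivity), inv_div]

theorem stmt6_general {Ω : Type*} [mΩ : MeasurableSpace Ω]
    (P Q : Measure Ω) [IsProbabilityMeasure P] [IsProbabilityMeasure Q]
    (r : Ω → ℝ) (hr_meas : Measurable r) (hr_nonneg : ∀ ω, 0 ≤ r ω)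
    (hPQ : ∀ A : Set Ω, MeasurableSet A → (P A).toReal = ∫ ω in A, r ω ∂Q)
    (Y : Ω → ℝ) (hY_meas : Measurable Y)
    (hY0 : ∀ ω, 0 ≤ Y ω) (hY1 : ∀ ω, Y ω ≤ 1)
    (hint : Integrable (fun ω => r ω * Real.exp (r ω)) Q)
    (D : ℝ) (hD : D = ∫ ω, (r ω * Real.exp (r ω - 1) - 1) ∂Q)
    (M : ℝ) (hM : M = 1 + Real.log (1 + D))
    (ε : ℝ) (hε0 : 0 < ε) (hε1 : ε ≤ 2 / Real.exp 1)
    (η : ℝ) (hη : η = 2 * Real.log (2 / ε) * M)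
    {Ω' : Type*} [MeasurableSpace Ω'] (Pr : Measure Ω') [IsProbabilityMeasure Pr]
    (t : ℕ) (X : Fin t → Ω' → Ω)
    (hX_meas : ∀ s, Measurable (X s))
    (hX_indep : iIndepFun (m := fun _ => mΩ) X Pr)
    (hX_dist : ∀ s, Measure.map (X s) Pr = Q)
    (δ : ℝ) (hδ : 0 < δ) :
    1 - 2 * Real.exp (-(δ ^ 2 * t) / (8 * Real.log (2 / ε) ^ 2 * M ^ 2)) ≤
      (Pr {ω' | (∫ ω, Y ω ∂P) - δ - ε / 2 ≤
          (1 / t) * ∑ s, (if r (X s ω') ≤ η then Y (X s ω') * r (X s ω') else 0) ∧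
          (1 / t) * ∑ s, (if r (X s ω') ≤ η then Y (X s ω') * r (X s ω') else 0) ≤
          (∫ ω, Y ω ∂P) + δ}).toReal := by
  have hr_one := integral_eq_one_of_toReal_eq_setIntegral hPQ
  have h_int : Integrable (fun ω ↦ r ω * Real.exp (r ω - 1)) Q := by
    simpa only [Real.exp_sub, mul_div_assoc] using hint.div_const (Real.exp 1)
  have hD0 : 0 ≤ D := hD ▸ integral_mul_exp_sub_one_sub_one_nonneg hr_nonneg hr_one h_int
  have hL : 1 ≤ Real.log (2 / ε) := one_le_log_two_div hε0 hε1
  have hM1 : 1 ≤ M := hM ▸ le_add_of_nonneg_right (Real.log_nonneg (by linarith))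
  have hη0 : 0 ≤ η := by rw [hη]; positivity
  have h_moment : ∫ ω, r ω * Real.exp (r ω - 1) ∂Q = 1 + D := by
    rw [hD, integral_sub h_int (integrable_const 1)]
    simp
  have h_tail : Real.exp (1 - η) * (1 + D) ≤ ε / 2 :=
    hη ▸ hM ▸ exp_one_sub_two_mul_log_two_div_mul_le hε0 hε1 hD0
  have h_bias := integral_clippedWeight_mem_Icc (η := η) hr_meas hY_meas hr_nonneg hPQ hY0 hY1
    h_int
  rw [h_moment] at h_bias
  have h_concentration := one_sub_two_mul_exp_le_measureReal_abs_mean_sub_integral_lt hX_meas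
    hX_indep hX_dist (measurable_clippedWeight hr_meas hY_meas)
    (fun ω ↦ ⟨clippedWeight_nonneg (hr_nonneg ω) (hY0 ω),
      clippedWeight_le hη0 (hr_nonneg ω) (hY1 ω)⟩) hδ.le
  calc _ ≤ 1 - 2 * Real.exp (-2 * t * δ ^ 2 / (η - 0) ^ 2) := by
        rw [sub_zero, hη]
        gcongr 1 - 2 * Real.exp ?_
        exact neg_two_mul_div_sq_le t.cast_nonneg
    _ ≤ _ := h_concentration
    _ ≤ _ := measureReal_mono fun ω' hω' ↦ by
      have := abs_sub_lt_iff.1 (Set.mem_ofPred_eq ▸ hω')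
      show _ ≤ (1 / t) * ∑ s, clippedWeight r Y η (X s ω') ∧
        (1 / t) * ∑ s, clippedWeight r Y η (X s ω') ≤ _
      constructor <;> linarith [h_bias.1, h_bias.2]

/-- Concentration of the clipped estimator with divergence-based clipping level
`η = 2·log(2/ε)·M`, where `M = 1 + log(1 + D)`: with probability at least
`1 − 2·exp(−δ²t/(8·(log(2/ε))²·M²))` the clipped empirical mean lies in
`[μ − δ − ε/2, μ + δ]`, where `μ = ∫ Y dP`. -/
theorem stmt6 {Ω : Type*} [mΩ : MeasurableSpace Ω]
    (P Q : Measure Ω) [IsProbabilityMeasure P] [IsProbabilityMeasure Q]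
    (r : Ω → ℝ) (hr_meas : Measurable r) (hr_nonneg : ∀ ω, 0 ≤ r ω)
    (hPQ : ∀ A : Set Ω, MeasurableSet A → (P A).toReal = ∫ ω in A, r ω ∂Q)
    (Y : Ω → ℝ) (hY_meas : Measurable Y)
    (hY0 : ∀ ω, 0 ≤ Y ω) (hY1 : ∀ ω, Y ω ≤ 1)
    (hint : Integrable (fun ω => r ω * Real.exp (r ω)) Q)
    (D : ℝ) (hD : D = ∫ ω, (r ω * Real.exp (r ω - 1) - 1) ∂Q)
    (M : ℝ) (hM : M = 1 + Real.log (1 + D))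
    (ε : ℝ) (hε0 : 0 < ε) (hε1 : ε ≤ 2 / Real.exp 1)
    (η : ℝ) (hη : η = 2 * Real.log (2 / ε) * M)
    {Ω' : Type*} [MeasurableSpace Ω'] (Pr : Measure Ω') [IsProbabilityMeasure Pr]
    (t : ℕ) (ht : 1 ≤ t) (X : Fin t → Ω' → Ω)
    (hX_meas : ∀ s, Measurable (X s))
    (hX_indep : iIndepFun (m := fun _ => mΩ) X Pr)
    (hX_dist : ∀ s, Measure.map (X s) Pr = Q)
    (δ : ℝ) (hδ : 0 < δ) :
    1 - 2 * Real.exp (-(δ ^ 2 * t) / (8 * Real.log (2 / ε) ^ 2 * M ^ 2)) ≤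
      (Pr {ω' | (∫ ω, Y ω ∂P) - δ - ε / 2 ≤
          (1 / t) * ∑ s, (if r (X s ω') ≤ η then Y (X s ω') * r (X s ω') else 0) ∧
          (1 / t) * ∑ s, (if r (X s ω') ≤ η then Y (X s ω') * r (X s ω') else 0) ≤
          (∫ ω, Y ω ∂P) + δ}).toReal :=
  stmt6_general (mΩ := mΩ) P Q r hr_meas hr_nonneg hPQ Y hY_meas hY0 hY1 hint D hD M hM ε hε0 hε1 η
    hη Pr t X hX_meas hX_indep hX_dist δ hδ
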